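/- The extension f̄(x) = ⊓_{y∈Y} d_V(d(x,y), f(y)) is the largest non-expansive extension of f: if h : (X,d) → (V,d_V) is non-expansive with h|_Y = f, then h(x) ⊑ f̄(x) for all x ∈ X. -/

import Mathlib

variable {V : Type*}

/-- Residuation (internal hom) of a quantale. -/
def dres [CommMonoid V] [CompleteLattice V] (a c : V) : V := sSup {u | u * a ≤ c}

section Residuation

variable [CommMonoid V] [CompleteLattice V]

lemma dres_mul_le [IsQuantale V] (a c : V) : dres a c * a ≤ c := by
  rw [dres, sSup_mul_distrib]
  exact iSup₂_le fun _ hu => hu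

lemma le_dres_iff [IsQuantale V] {a c u : V} : u ≤ dres a c ↔ u * a ≤ c :=
  ⟨fun hu => (mul_le_mul_left hu a).trans (dres_mul_le a c), fun hu => le_sSup hu⟩

end Residuation

theorem stmt10_general [CommMonoid V] [CompleteLattice V] [IsQuantale V]
    {X : Type*} (d : X → X → V)
    (Y : Set X) (f : Y → V)
    (h : X → V)
    (hnonexp : ∀ x₁ x₂, d x₁ x₂ ≤ dres (h x₁) (h x₂))
    (hext : ∀ y : Y, h ↑y = f y) :
    ∀ x, h x ≤ ⨅ y : Y, dres (d x ↑y) (f y) := by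
  intro x
  refine le_iInf fun y => le_dres_iff.2 ?_
  rw [← hext y, mul_comm]
  exact le_dres_iff.1 (hnonexp x y)

/-- The McShane–Whitney extension is the largest non-expansive extension. -/
theorem stmt10 [CommMonoid V] [CompleteLattice V] [IsQuantale V]
    {X : Type*} (d : X → X → V)
    (hrefl : ∀ x, (1 : V) ≤ d x x)
    (htrans : ∀ x y z, d x y * d y z ≤ d x z)
    (Y : Set X) (f : Y → V)
    (hf : ∀ y₁ y₂ : Y, d (↑y₁) (↑y₂) ≤ dres (f y₁) (f y₂))
    (h : X → V)
    (hnonexp : ∀ x₁ x₂, d x₁ x₂ ≤ dres (h x₁) (h x₂))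
    (hext : ∀ y : Y, h ↑y = f y) :
    ∀ x, h x ≤ ⨅ y : Y, dres (d x ↑y) (f y) :=
  stmt10_general d Y f h hnonexp hext
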